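/- For every β ∈ 𝔱 and every μ ∈ S_β with β_μ = β, the element β/‖β‖² belongs to Λ(μ). In particular, Q(μ) = 1/‖β‖² for every μ ∈ S_β, and S_β = G.{μ ∈ S_β : β/‖β‖² ∈ Λ(μ)}. -/

import Mathlib

open scoped BigOperators
open Matrix

noncomputable section

/-- An element of `V_n`, i.e. a bilinear map ℝⁿ×ℝⁿ→ℝⁿ, encoded by its structure
constants `μ i j k = ⟨μ(e_i,e_j), e_k⟩`. -/
abbrev Vn (n : ℕ) : Type := Fin n → Fin n → Fin n → ℝ

variable {n : ℕ}

/-- skew-symmetry, i.e. membership in `V_n` = Λ²(ℝⁿ)*⊗ℝⁿ. -/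
def IsSkew (μ : Vn n) : Prop := ∀ i j k, μ i j k = - μ j i k

/-- The bilinear map μ : ℝⁿ×ℝⁿ→ℝⁿ associated to the structure constants. -/
def brkt (μ : Vn n) (x y : Fin n → ℝ) : Fin n → ℝ := fun k => ∑ i, ∑ j, x i * y j * μ i j k

/-- The inner product ⟨α,β⟩ = tr(αβᵀ) on n×n matrices. -/
def innM (α β : Matrix (Fin n) (Fin n) ℝ) : ℝ := (α * βᵀ).trace

/-- ‖β‖² for the trace inner product. -/
def normsqM (β : Matrix (Fin n) (Fin n) ℝ) : ℝ := innM β β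

/-- ‖β‖ for the trace inner product. -/
def normM (β : Matrix (Fin n) (Fin n) ℝ) : ℝ := Real.sqrt (normsqM β)

/-- The inner product on V_n: ⟨μ,λ⟩ = Σ_{ijk} μ_{ij}^k λ_{ij}^k. -/
def innV (μ lam : Vn n) : ℝ := ∑ i, ∑ j, ∑ k, μ i j k * lam i j k

/-- The weight α_{ij}^k = E_kk − E_ii − E_jj. -/
def wt (i j k : Fin n) : Matrix (Fin n) (Fin n) ℝ :=
  Matrix.single k k 1 - Matrix.single i i 1 - Matrix.single j j 1

/-- The GL(n,ℝ)-action on V_n: (g.μ)(X,Y) = g μ(g⁻¹X, g⁻¹Y), in structure constants. -/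
def act (g : GL (Fin n) ℝ) (μ : Vn n) : Vn n := fun i j k =>
  ∑ p, ∑ q, ∑ r, (↑g⁻¹ : Matrix (Fin n) (Fin n) ℝ) p i *
    (↑g⁻¹ : Matrix (Fin n) (Fin n) ℝ) q j * (↑g : Matrix (Fin n) (Fin n) ℝ) k r * μ p q r

/-- The infinitesimal action π(α)μ = αμ(·,·) − μ(α·,·) − μ(·,α·), as an endomorphism of V_n. -/
def piEnd (α : Matrix (Fin n) (Fin n) ℝ) : Module.End ℝ (Vn n) where
  toFun μ := fun i j k =>
    (∑ r, α k r * μ i j r) - (∑ p, α p i * μ p j k) - (∑ q, α q j * μ i q k)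
  map_add' μ ν := by
    funext i j k
    simp [mul_add, Finset.sum_add_distrib]
    ring
  map_smul' a μ := by
    funext i j k
    simp only [Pi.smul_apply, smul_eq_mul, RingHom.id_apply, Finset.mul_sum, mul_sub]
    simp [mul_comm, mul_left_comm]


/-- conjugation gαg⁻¹ of a matrix by an element of GL. -/
def mconj (g : GL (Fin n) ℝ) (α : Matrix (Fin n) (Fin n) ℝ) : Matrix (Fin n) (Fin n) ℝ :=
  (↑g : Matrix (Fin n) (Fin n) ℝ) * α * (↑g⁻¹ : Matrix (Fin n) (Fin n) ℝ)

/-- The set D of diagonalizable matrices, D = ∪_{g∈G} g 𝔱 g⁻¹. -/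
def DiagSet : Set (Matrix (Fin n) (Fin n) ℝ) :=
  {α | ∃ g : GL (Fin n) ℝ, ∃ δ : Matrix (Fin n) (Fin n) ℝ, δ.IsDiag ∧
    α = mconj g δ}

/-- m(μ,α): the smallest eigenvalue of π(α) such that the projection of μ onto the
corresponding eigenspace is nonzero (for diagonalizable α, the projection onto the
eigenspace of r is nonzero iff μ is not in the sum of the other eigenspaces). -/
def mFun (μ : Vn n) (α : Matrix (Fin n) (Fin n) ℝ) : ℝ :=
  sInf {r : ℝ | μ ∉ ⨆ (a : ℝ) (_ : a ≠ r), Module.End.eigenspace (piEnd α) a}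

/-- q(α) = tr(α²). -/
def qF (α : Matrix (Fin n) (Fin n) ℝ) : ℝ := (α * α).trace

/-- Q(μ) = inf{q(α) : α ∈ D, m(μ,α) ≥ 1}. -/
def QF (μ : Vn n) : ℝ := sInf {x : ℝ | ∃ α ∈ DiagSet (n := n), 1 ≤ mFun μ α ∧ x = qF α}

/-- Λ(μ) = {β ∈ D : q(β) = Q(μ), m(μ,β) ≥ 1}. -/
def LambdaF (μ : Vn n) : Set (Matrix (Fin n) (Fin n) ℝ) :=
  {β | β ∈ DiagSet (n := n) ∧ qF β = QF μ ∧ 1 ≤ mFun μ β}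

/-- m(μ,α) for diagonal α: min{⟨α,α_ij^k⟩ : μ_ij^k ≠ 0}. -/
def mT (μ : Vn n) (α : Matrix (Fin n) (Fin n) ℝ) : ℝ :=
  sInf {x : ℝ | ∃ i j k, μ i j k ≠ 0 ∧ x = innM α (wt i j k)}

/-- Q_T(μ) = inf{‖α‖² : α ∈ 𝔱, m(μ,α) ≥ 1}. -/
def QT (μ : Vn n) : ℝ :=
  sInf {x : ℝ | ∃ α : Matrix (Fin n) (Fin n) ℝ, α.IsDiag ∧ 1 ≤ mT μ α ∧ x = normsqM α}

/-- Λ_T(μ) = {β ∈ 𝔱 : ‖β‖² = Q_T(μ), m(μ,β) ≥ 1}. -/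
def LambdaT (μ : Vn n) : Set (Matrix (Fin n) (Fin n) ℝ) :=
  {β | β.IsDiag ∧ normsqM β = QT μ ∧ 1 ≤ mT μ β}

/-- The set of weights {α_ij^k : μ_ij^k ≠ 0}. -/
def wtSet (μ : Vn n) : Set (Matrix (Fin n) (Fin n) ℝ) :=
  {w | ∃ i j k, μ i j k ≠ 0 ∧ w = wt i j k}

/-- β_μ: the minimal convex combination of {α_ij^k : μ_ij^k ≠ 0}, i.e. the unique vector of
minimal norm in the convex hull of this set. -/
def betaMu (μ : Vn n) : Matrix (Fin n) (Fin n) ℝ :=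
  Classical.epsilon fun β => β ∈ convexHull ℝ (wtSet μ) ∧
    ∀ γ ∈ convexHull ℝ (wtSet μ), normsqM β ≤ normsqM γ

/-- The stratum S_β = {μ ∈ V_n∖{0} : β is an element of maximal norm in {β_{g.μ} : g ∈ G}}. -/
def SS (β : Matrix (Fin n) (Fin n) ℝ) : Set (Vn n) :=
  {μ | μ ≠ 0 ∧ IsSkew μ ∧ (∃ g : GL (Fin n) ℝ, betaMu (act g μ) = β) ∧
    ∀ g : GL (Fin n) ℝ, normM (betaMu (act g μ)) ≤ normM β}

/-- W_β = {μ ∈ V_n : ⟨β,α_ij^k⟩ ≥ ‖β‖² whenever μ_ij^k ≠ 0}. -/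
def Wset (β : Matrix (Fin n) (Fin n) ℝ) : Set (Vn n) :=
  {μ | IsSkew μ ∧ ∀ i j k, μ i j k ≠ 0 → normsqM β ≤ innM β (wt i j k)}

/-- Z_β = {μ ∈ V_n : ⟨β,α_ij^k⟩ = ‖β‖² whenever μ_ij^k ≠ 0}. -/
def Zset (β : Matrix (Fin n) (Fin n) ℝ) : Set (Vn n) :=
  {μ | IsSkew μ ∧ ∀ i j k, μ i j k ≠ 0 → innM β (wt i j k) = normsqM β}

/-- Y_β = {μ ∈ W_β : ⟨β,α_ij^k⟩ = ‖β‖² for at least one μ_ij^k ≠ 0}. -/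
def Yset (β : Matrix (Fin n) (Fin n) ℝ) : Set (Vn n) :=
  {μ | μ ∈ Wset β ∧ ∃ i j k, μ i j k ≠ 0 ∧ innM β (wt i j k) = normsqM β}

/-- The closed Weyl chamber: diagonal matrices with nondecreasing diagonal entries. -/
def upperT : Set (Matrix (Fin n) (Fin n) ℝ) :=
  {α | α.IsDiag ∧ Monotone fun i => α i i}

/-- B = {β ∈ closure(𝔱⁺) : S_β ≠ ∅}. -/
def Bset : Set (Matrix (Fin n) (Fin n) ℝ) := {β | β ∈ upperT (n := n) ∧ (SS β).Nonempty}

/-- Der(μ) = {α : π(α)μ = 0}. -/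
def Der (μ : Vn n) : Set (Matrix (Fin n) (Fin n) ℝ) := {α | piEnd α μ = 0}

/-- The subgroup of lower triangular invertible matrices. -/
def lowerTriGL : Set (GL (Fin n) ℝ) :=
  {g | ∀ i j : Fin n, i < j → (↑g : Matrix (Fin n) (Fin n) ℝ) i j = 0}

/-- The parabolic subgroup P_α = B₀ G_α attached to α ∈ closure(𝔱⁺). -/
def Pgroup (α : Matrix (Fin n) (Fin n) ℝ) : Set (GL (Fin n) ℝ) :=
  {p | ∃ b ∈ lowerTriGL (n := n), ∃ h : GL (Fin n) ℝ,
    mconj h α = α ∧ p = b * h}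

/-- The parabolic subgroup P_{α'} = g P_α g⁻¹ attached to a diagonalizable matrix
α' = gαg⁻¹, α ∈ closure(𝔱⁺)  (this is independent of the chosen representation). -/
def PgroupD (α' : Matrix (Fin n) (Fin n) ℝ) : Set (GL (Fin n) ℝ) :=
  {p | ∃ g : GL (Fin n) ℝ, ∃ α ∈ upperT (n := n),
    α' = mconj g α ∧ p ∈ (fun h => g * h * g⁻¹) '' Pgroup α}

/-- membership in O(n). -/
def IsOrth (g : GL (Fin n) ℝ) : Prop := (↑g : Matrix (Fin n) (Fin n) ℝ)ᵀ * (↑g : Matrix (Fin n) (Fin n) ℝ) = 1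

/-- The orthogonal projection p_β : W_β → Z_β (in coordinates: it keeps exactly the
coefficients whose weight pairs to ‖β‖² with β). -/
def pproj (β : Matrix (Fin n) (Fin n) ℝ) (μ : Vn n) : Vn n :=
  fun i j k => if innM β (wt i j k) = normsqM β then μ i j k else 0

/-- H_β: the connected subgroup of G whose Lie algebra 𝔥_β is the orthogonal complement
of β inside 𝔤_β = {α : αβ = βα}, realized as the subgroup generated by exponentials. -/
def Hgrp (β : Matrix (Fin n) (Fin n) ℝ) : Subgroup (GL (Fin n) ℝ) :=
  Subgroup.closure {g | ∃ α : Matrix (Fin n) (Fin n) ℝ,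
    α * β = β * α ∧ innM α β = 0 ∧ (↑g : Matrix (Fin n) (Fin n) ℝ) = NormedSpace.exp α}

/-- μ is H_β-semistable if 0 is not in the closure of the orbit H_β.μ. -/
def Semistable (β : Matrix (Fin n) (Fin n) ℝ) (μ : Vn n) : Prop :=
  (0 : Vn n) ∉ closure ((fun g => act g μ) '' ((Hgrp β : Subgroup (GL (Fin n) ℝ)) : Set (GL (Fin n) ℝ)))

/-- The Jacobi identity for the bilinear map attached to μ. -/
def IsJacobi (μ : Vn n) : Prop :=
  ∀ x y z : Fin n → ℝ,
    brkt μ (brkt μ x y) z + brkt μ (brkt μ y z) x + brkt μ (brkt μ z x) y = 0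

/-- Iterated (left-normed) brackets ad x₁ ∘ … ∘ ad x_m (y). -/
def iterBr (μ : Vn n) : List (Fin n → ℝ) → (Fin n → ℝ) → (Fin n → ℝ)
  | [], y => y
  | x :: l, y => brkt μ x (iterBr μ l y)

/-- Nilpotency: some length of iterated brackets vanishes identically. -/
def IsNilp (μ : Vn n) : Prop :=
  ∃ m : ℕ, ∀ l : List (Fin n → ℝ), l.length = m → ∀ y, iterBr μ l y = 0

/-- N: the set of nilpotent Lie brackets in V_n. -/
def Nset : Set (Vn n) := {μ | IsSkew μ ∧ IsJacobi μ ∧ IsNilp μ}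


/-! ### Auxiliary lemmas -/

section Aux

lemma sum_comm6' {M : Type*} [AddCommMonoid M]
    (f : Fin n → Fin n → Fin n → Fin n → Fin n → Fin n → M) :
    ∑ p, ∑ q, ∑ r, ∑ s, ∑ t, ∑ u, f p q r s t u
  = ∑ s, ∑ t, ∑ u, ∑ p, ∑ q, ∑ r, f p q r s t u := by
  conv_lhs => enter [2, p, 2, q]; rw [Finset.sum_comm]
  conv_lhs => enter [2, p]; rw [Finset.sum_comm]
  conv_lhs => rw [Finset.sum_comm]
  conv_lhs => enter [2, s, 2, p, 2, q]; rw [Finset.sum_comm]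
  conv_lhs => enter [2, s, 2, p]; rw [Finset.sum_comm]
  conv_lhs => enter [2, s]; rw [Finset.sum_comm]
  conv_lhs => enter [2, s, 2, t, 2, p, 2, q]; rw [Finset.sum_comm]
  conv_lhs => enter [2, s, 2, t, 2, p]; rw [Finset.sum_comm]
  conv_lhs => enter [2, s, 2, t]; rw [Finset.sum_comm]

lemma sum_comm3' {M : Type*} [AddCommMonoid M] (F : Fin n → Fin n → Fin n → M) :
    ∑ p, ∑ q, ∑ r, F p q r = ∑ r, ∑ q, ∑ p, F p q r := by
  conv_lhs => enter [2, p]; rw [Finset.sum_comm]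
  conv_lhs => rw [Finset.sum_comm]
  conv_lhs => enter [2, r]; rw [Finset.sum_comm]

lemma act_one (μ : Vn n) : act (1 : GL (Fin n) ℝ) μ = μ := by
  funext i j k
  simp [act, Matrix.one_apply]

lemma act_act (g h : GL (Fin n) ℝ) (μ : Vn n) : act g (act h μ) = act (g * h) μ := by
  funext i j k
  simp only [act, _root_.mul_inv_rev, Units.val_mul, Matrix.mul_apply]
  simp only [Finset.sum_mul, Finset.mul_sum]
  rw [sum_comm6']
  refine Finset.sum_congr rfl fun s _ => Finset.sum_congr rfl fun t _ =>
    Finset.sum_congr rfl fun u _ => ?_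
  rw [sum_comm3']
  refine Finset.sum_congr rfl fun p _ =>
    Finset.sum_congr rfl fun q _ => Finset.sum_congr rfl fun r _ => by ring

lemma act_zero (g : GL (Fin n) ℝ) : act g (0 : Vn n) = 0 := by
  funext i j k; simp [act]

lemma act_inv_act (g : GL (Fin n) ℝ) (μ : Vn n) : act g⁻¹ (act g μ) = μ := by
  rw [act_act, inv_mul_cancel, act_one]

lemma act_act_inv (g : GL (Fin n) ℝ) (μ : Vn n) : act g (act g⁻¹ μ) = μ := by
  rw [act_act, mul_inv_cancel, act_one]

lemma act_ne_zero (g : GL (Fin n) ℝ) {μ : Vn n} (h : μ ≠ 0) : act g μ ≠ 0 := by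
  intro h0
  apply h
  have := congrArg (act g⁻¹) h0
  rwa [act_inv_act, act_zero] at this

lemma act_skew (g : GL (Fin n) ℝ) {μ : Vn n} (h : IsSkew μ) : IsSkew (act g μ) := by
  intro i j k
  simp only [act]
  rw [Finset.sum_comm]
  simp only [← Finset.sum_neg_distrib]
  refine Finset.sum_congr rfl fun p _ => Finset.sum_congr rfl fun q _ =>
    Finset.sum_congr rfl fun r _ => ?_
  rw [h p q r]; ring

end Aux
section Aux2

lemma innM_eq (α β : Matrix (Fin n) (Fin n) ℝ) :
    innM α β = ∑ x, ∑ y, α x y * β x y := by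
  simp [innM, Matrix.trace, Matrix.diag, Matrix.mul_apply, Matrix.transpose_apply]

lemma innM_smul_right (c : ℝ) (α β : Matrix (Fin n) (Fin n) ℝ) :
    innM α (c • β) = c * innM α β := by
  simp [innM_eq, Finset.mul_sum, mul_comm, mul_left_comm]

lemma innM_smul_left (c : ℝ) (α β : Matrix (Fin n) (Fin n) ℝ) :
    innM (c • α) β = c * innM α β := by
  simp [innM_eq, Finset.mul_sum, mul_comm, mul_left_comm]

lemma innM_add_right (α β γ : Matrix (Fin n) (Fin n) ℝ) :
    innM α (β + γ) = innM α β + innM α γ := by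
  simp [innM_eq, mul_add, Finset.sum_add_distrib]

lemma isLinearMap_innM (δ : Matrix (Fin n) (Fin n) ℝ) :
    IsLinearMap ℝ (fun γ => innM δ γ) :=
  ⟨fun x y => innM_add_right δ x y, fun c x => by simp [innM_smul_right]⟩

lemma normsqM_nonneg (β : Matrix (Fin n) (Fin n) ℝ) : 0 ≤ normsqM β := by
  rw [normsqM, innM_eq]
  exact Finset.sum_nonneg fun x _ => Finset.sum_nonneg fun y _ => mul_self_nonneg _

lemma normsqM_pos {β : Matrix (Fin n) (Fin n) ℝ} (h : β ≠ 0) : 0 < normsqM β := by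
  rcases lt_or_eq_of_le (normsqM_nonneg β) with h1 | h1
  · exact h1
  · exfalso; apply h
    have h2 : ∑ x, ∑ y, β x y * β x y = 0 := by rw [← innM_eq, ← normsqM, ← h1]
    ext x y
    have hx := (Finset.sum_eq_zero_iff_of_nonneg
      (fun x _ => Finset.sum_nonneg fun y _ => mul_self_nonneg (β x y))).1 h2 x (Finset.mem_univ x)
    have hy := (Finset.sum_eq_zero_iff_of_nonneg
      (fun y _ => mul_self_nonneg (β x y))).1 hx y (Finset.mem_univ y)
    simpa [mul_self_eq_zero] using hy

lemma normM_sq (β : Matrix (Fin n) (Fin n) ℝ) : normM β ^ 2 = normsqM β := by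
  rw [normM, Real.sq_sqrt (normsqM_nonneg β)]

lemma normsq_le_of_normM_le {x y : Matrix (Fin n) (Fin n) ℝ} (h : normM x ≤ normM y) :
    normsqM x ≤ normsqM y := by
  rw [← normM_sq, ← normM_sq]
  have hx : 0 ≤ normM x := Real.sqrt_nonneg _
  nlinarith

/-- Cauchy–Schwarz for the trace inner product. -/
lemma innM_sq_le (α β : Matrix (Fin n) (Fin n) ℝ) :
    innM α β ^ 2 ≤ normsqM α * normsqM β := by
  have e1 : innM α β = ∑ p : Fin n × Fin n, α p.1 p.2 * β p.1 p.2 :=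
    (innM_eq α β).trans
      (Fintype.sum_prod_type (f := fun p : Fin n × Fin n => α p.1 p.2 * β p.1 p.2)).symm
  have e2 : normsqM α = ∑ p : Fin n × Fin n, α p.1 p.2 ^ 2 := by
    rw [normsqM, innM_eq, ← Fintype.sum_prod_type (f := fun p : Fin n × Fin n => α p.1 p.2 * α p.1 p.2)]
    exact Finset.sum_congr rfl fun p _ => (sq (α p.1 p.2)).symm ▸ by ring
  have e3 : normsqM β = ∑ p : Fin n × Fin n, β p.1 p.2 ^ 2 := by
    rw [normsqM, innM_eq, ← Fintype.sum_prod_type (f := fun p : Fin n × Fin n => β p.1 p.2 * β p.1 p.2)]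
    exact Finset.sum_congr rfl fun p _ => by ring
  rw [e1, e2, e3]
  exact Finset.sum_mul_sq_le_sq_mul_sq _ _ _

lemma normsq_combo (t : ℝ) (x y : Matrix (Fin n) (Fin n) ℝ) :
    normsqM ((1 - t) • x + t • y)
      = (1 - t) ^ 2 * normsqM x + 2 * (1 - t) * t * innM x y + t ^ 2 * normsqM y := by
  simp only [normsqM, innM_eq, Matrix.add_apply, Matrix.smul_apply, smul_eq_mul,
    Finset.mul_sum, ← Finset.sum_add_distrib]
  exact Finset.sum_congr rfl fun a _ => Finset.sum_congr rfl fun b _ => by ring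

lemma normsq_sub (x y : Matrix (Fin n) (Fin n) ℝ) :
    normsqM (x - y) = normsqM x - 2 * innM x y + normsqM y := by
  simp only [normsqM, innM_eq, Matrix.sub_apply, Finset.mul_sum,
    ← Finset.sum_add_distrib, ← Finset.sum_sub_distrib]
  exact Finset.sum_congr rfl fun a _ => Finset.sum_congr rfl fun b _ => by ring

/-- minimal norm point in a convex set: ⟨β₀, w⟩ ≥ ‖β₀‖². -/
lemma min_inner {S : Set (Matrix (Fin n) (Fin n) ℝ)} (hconv : Convex ℝ S)
    {β₀ : Matrix (Fin n) (Fin n) ℝ} (hβ : β₀ ∈ S)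
    (hmin : ∀ γ ∈ S, normsqM β₀ ≤ normsqM γ) {w : Matrix (Fin n) (Fin n) ℝ} (hw : w ∈ S) :
    normsqM β₀ ≤ innM β₀ w := by
  by_contra hlt
  push_neg at hlt
  set X := normsqM β₀ with hX
  set P := innM β₀ w with hP
  set Y := normsqM w with hY
  set K := X - 2 * P + Y with hKdef
  have hK : 0 ≤ K := by
    have := normsqM_nonneg (β₀ - w)
    rw [normsq_sub] at this
    linarith
  set t := min 1 ((X - P) / (K + 1)) with htdef
  have hK1 : (0:ℝ) < K + 1 := by linarith
  have ht0 : 0 < t := lt_min one_pos (div_pos (by linarith) hK1)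
  have ht1 : t ≤ 1 := min_le_left _ _
  have hz : (1 - t) • β₀ + t • w ∈ S :=
    hconv hβ hw (by linarith) (le_of_lt ht0) (by ring)
  have h := hmin _ hz
  rw [normsq_combo] at h
  have h3 : t * (K + 1) ≤ X - P := by
    calc t * (K + 1) ≤ ((X - P) / (K + 1)) * (K + 1) :=
          mul_le_mul_of_nonneg_right (min_le_right _ _) (le_of_lt hK1)
      _ = X - P := div_mul_cancel₀ _ (ne_of_gt hK1)
  nlinarith [mul_pos ht0 (sub_pos.2 hlt), mul_le_mul_of_nonneg_left h3 (le_of_lt ht0),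
    mul_nonneg (le_of_lt ht0) hK]
end Aux2
section Aux3

lemma innM_wt (δ : Matrix (Fin n) (Fin n) ℝ) (i j k : Fin n) :
    innM δ (wt i j k) = δ k k - δ i i - δ j j := by
  have h : ∀ a : Fin n, innM δ (Matrix.single a a 1) = δ a a := by
    intro a
    rw [innM_eq]
    simp [Matrix.single, Matrix.of_apply, ite_and, mul_ite, Finset.sum_ite_eq',
      Finset.sum_ite_eq]
  have hsub : ∀ x y : Matrix (Fin n) (Fin n) ℝ, innM δ (x - y) = innM δ x - innM δ y := by
    intro x y
    simp [innM_eq, Matrix.sub_apply, mul_sub, Finset.sum_sub_distrib]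
  rw [wt, hsub, hsub, h, h, h]

lemma trace_wt (i j k : Fin n) : (wt i j k).trace = -1 := by
  simp [wt, Matrix.trace_sub]

lemma exists_ne_zero {μ : Vn n} (h : μ ≠ 0) : ∃ i j k, μ i j k ≠ 0 := by
  by_contra hc
  push_neg at hc
  exact h (by funext i j k; simp [hc i j k])

lemma wtSet_nonempty {μ : Vn n} (h : μ ≠ 0) : (wtSet μ).Nonempty := by
  obtain ⟨i, j, k, hne⟩ := exists_ne_zero h
  exact ⟨wt i j k, i, j, k, hne, rfl⟩

lemma wtSet_finite (μ : Vn n) : (wtSet μ).Finite := by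
  apply Set.Finite.subset (Set.finite_range
    (fun t : Fin n × Fin n × Fin n => wt t.1 t.2.1 t.2.2))
  rintro w ⟨i, j, k, _, rfl⟩
  exact ⟨(i, j, k), rfl⟩

lemma continuous_normsqM : Continuous fun M : Matrix (Fin n) (Fin n) ℝ => normsqM M := by
  have : (fun M : Matrix (Fin n) (Fin n) ℝ => normsqM M)
      = fun M => ∑ x, ∑ y, M x y * M x y := by
    funext M; rw [normsqM, innM_eq]
  rw [this]
  refine continuous_finset_sum _ fun x _ => continuous_finset_sum _ fun y _ => ?_
  exact (continuous_id.matrix_elem x y).mul (continuous_id.matrix_elem x y)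

lemma betaMu_spec {μ : Vn n} (h : μ ≠ 0) :
    betaMu μ ∈ convexHull ℝ (wtSet μ) ∧
      ∀ γ ∈ convexHull ℝ (wtSet μ), normsqM (betaMu μ) ≤ normsqM γ := by
  apply Classical.epsilon_spec (p := fun β => β ∈ convexHull ℝ (wtSet μ) ∧
    ∀ γ ∈ convexHull ℝ (wtSet μ), normsqM β ≤ normsqM γ)
  have hcpt : IsCompact (convexHull ℝ (wtSet μ)) := (wtSet_finite μ).isCompact_convexHull ℝ
  have hne : (convexHull ℝ (wtSet μ)).Nonempty :=
    (wtSet_nonempty h).mono (subset_convexHull ℝ _)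
  obtain ⟨x, hx, hmin⟩ := hcpt.exists_isMinOn hne continuous_normsqM.continuousOn
  exact ⟨x, hx, fun γ hγ => hmin hγ⟩

lemma trace_of_mem_hull {μ : Vn n} {γ : Matrix (Fin n) (Fin n) ℝ}
    (hγ : γ ∈ convexHull ℝ (wtSet μ)) : γ.trace = -1 := by
  have hlin : IsLinearMap ℝ (fun A : Matrix (Fin n) (Fin n) ℝ => A.trace) :=
    ⟨fun x y => Matrix.trace_add x y, fun c x => Matrix.trace_smul c x⟩
  have : convexHull ℝ (wtSet μ) ⊆ {A | Matrix.trace A = -1} := by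
    apply convexHull_min _ (convex_hyperplane hlin (-1))
    rintro w ⟨i, j, k, _, rfl⟩
    exact trace_wt i j k
  exact this hγ

lemma betaMu_ne_zero {μ : Vn n} (h : μ ≠ 0) : betaMu μ ≠ 0 := by
  intro h0
  have := trace_of_mem_hull (betaMu_spec h).1
  rw [h0] at this
  simp at this

end Aux3
section Aux4

/-- basis vectors of V_n. -/
def bVec (s t u : Fin n) : Vn n := fun a b c =>
  (if a = s then (1:ℝ) else 0) * (if b = t then 1 else 0) * (if c = u then 1 else 0)

lemma bVec_apply_ne {s t u a b c : Fin n} (h : ¬(a = s ∧ b = t ∧ c = u)) :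
    bVec s t u a b c = 0 := by
  by_cases h1 : a = s <;> by_cases h2 : b = t <;> by_cases h3 : c = u <;>
    simp [bVec, h1, h2, h3] <;> tauto

lemma decomp (μ : Vn n) :
    μ = ∑ x : Fin n × Fin n × Fin n, μ x.1 x.2.1 x.2.2 • bVec x.1 x.2.1 x.2.2 := by
  funext a b c
  have happ : (∑ x : Fin n × Fin n × Fin n, μ x.1 x.2.1 x.2.2 • bVec x.1 x.2.1 x.2.2) a b c
      = ∑ x : Fin n × Fin n × Fin n, μ x.1 x.2.1 x.2.2 * bVec x.1 x.2.1 x.2.2 a b c := by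
    rw [Finset.sum_apply, Finset.sum_apply, Finset.sum_apply]
    rfl
  rw [happ]
  simp [Fintype.sum_prod_type, bVec, mul_ite, mul_one, mul_zero, Finset.sum_ite_eq,
    Finset.sum_ite_eq']

lemma piEnd_diag {δ : Matrix (Fin n) (Fin n) ℝ} (hδ : δ.IsDiag) (μ : Vn n) (i j k : Fin n) :
    piEnd δ μ i j k = (δ k k - δ i i - δ j j) * μ i j k := by
  have h1 : ∑ r, δ k r * μ i j r = δ k k * μ i j k :=
    Finset.sum_eq_single k (fun r _ hr => by rw [hδ (Ne.symm hr), zero_mul]) (by simp)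
  have h2 : ∑ p, δ p i * μ p j k = δ i i * μ i j k :=
    Finset.sum_eq_single i (fun p _ hp => by rw [hδ hp, zero_mul]) (by simp)
  have h3 : ∑ q, δ q j * μ i q k = δ j j * μ i j k :=
    Finset.sum_eq_single j (fun q _ hq => by rw [hδ hq, zero_mul]) (by simp)
  show (∑ r, δ k r * μ i j r) - (∑ p, δ p i * μ p j k) - (∑ q, δ q j * μ i q k) = _
  rw [h1, h2, h3]; ring

/-- the submodule of μ vanishing on all coordinates of weight-pairing r. -/
def Ksub (δ : Matrix (Fin n) (Fin n) ℝ) (r : ℝ) : Submodule ℝ (Vn n) where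
  carrier := {μ | ∀ i j k, δ k k - δ i i - δ j j = r → μ i j k = 0}
  add_mem' := fun ha hb i j k h => by
    simp only [Pi.add_apply]
    rw [ha i j k h, hb i j k h, add_zero]
  zero_mem' := fun i j k _ => rfl
  smul_mem' := fun c μ hμ i j k h => by
    simp only [Pi.smul_apply, smul_eq_mul]
    rw [hμ i j k h, mul_zero]

lemma bVec_eigen {δ : Matrix (Fin n) (Fin n) ℝ} (hδ : δ.IsDiag) (s t u : Fin n) :
    bVec s t u ∈ Module.End.eigenspace (piEnd δ) (δ u u - δ s s - δ t t) := by
  rw [Module.End.mem_eigenspace_iff]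
  funext a b c
  rw [piEnd_diag hδ]
  by_cases h : a = s ∧ b = t ∧ c = u
  · obtain ⟨rfl, rfl, rfl⟩ := h
    simp
  · simp only [Pi.smul_apply, bVec_apply_ne h, smul_eq_mul, mul_zero]

lemma iSup_eigen_eq {δ : Matrix (Fin n) (Fin n) ℝ} (hδ : δ.IsDiag) (r : ℝ) :
    (⨆ (a : ℝ) (_ : a ≠ r), Module.End.eigenspace (piEnd δ) a) = Ksub δ r := by
  apply le_antisymm
  · refine iSup_le fun a => iSup_le fun ha => ?_
    intro μ hμ i j k hijk
    rw [Module.End.mem_eigenspace_iff] at hμ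
    have := congrFun (congrFun (congrFun hμ i) j) k
    rw [piEnd_diag hδ] at this
    simp only [Pi.smul_apply, smul_eq_mul] at this
    rw [hijk] at this
    rcases mul_eq_mul_right_iff.1 this with h' | h'
    · exact absurd h'.symm ha
    · exact h'
  · intro μ hμ
    rw [decomp μ]
    refine Submodule.sum_mem _ fun x _ => ?_
    by_cases hx : μ x.1 x.2.1 x.2.2 = 0
    · rw [hx, zero_smul]; exact Submodule.zero_mem _
    · refine Submodule.smul_mem _ _ ?_
      have hne : δ x.2.2 x.2.2 - δ x.1 x.1 - δ x.2.1 x.2.1 ≠ r :=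
        fun h => hx (hμ x.1 x.2.1 x.2.2 h)
      exact le_iSup₂ (f := fun (a : ℝ) (_ : a ≠ r) => Module.End.eigenspace (piEnd δ) a)
        _ hne (bVec_eigen hδ x.1 x.2.1 x.2.2)

lemma mFun_eq_mT {δ : Matrix (Fin n) (Fin n) ℝ} (hδ : δ.IsDiag) (μ : Vn n) :
    mFun μ δ = mT μ δ := by
  rw [mFun, mT]
  congr 1
  ext r
  simp only [Set.mem_setOf_eq, iSup_eigen_eq hδ]
  constructor
  · intro h
    by_contra hc
    push_neg at hc
    refine h fun i j k hijk => ?_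
    by_contra hne
    exact hc i j k hne (by rw [innM_wt]; exact hijk.symm)
  · rintro ⟨i, j, k, hne, hr⟩ h
    exact hne (h i j k (by rw [innM_wt] at hr; linarith))

end Aux4
section Aux5

lemma piEnd_apply (α : Matrix (Fin n) (Fin n) ℝ) (μ : Vn n) (i j k : Fin n) :
    piEnd α μ i j k
      = (∑ r, α k r * μ i j r) - (∑ p, α p i * μ p j k) - (∑ q, α q j * μ i q k) := rfl

lemma equiv_bVec_aux (g : GL (Fin n) ℝ) (α : Matrix (Fin n) (Fin n) ℝ) (s t u : Fin n) (i j k : Fin n) :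
    (∑ r, mconj g α k r * (act g (bVec s t u)) i j r)
      - (∑ p, mconj g α p i * (act g (bVec s t u)) p j k)
      - (∑ q, mconj g α q j * (act g (bVec s t u)) i q k)
    = ∑ p, ∑ q, ∑ r, (↑g⁻¹ : Matrix (Fin n) (Fin n) ℝ) p i *
        (↑g⁻¹ : Matrix (Fin n) (Fin n) ℝ) q j * (↑g : Matrix (Fin n) (Fin n) ℝ) k r *
        ((if p = s then 1 else 0) * (if q = t then 1 else 0) * α r u
         - (if q = t then 1 else 0) * (if r = u then 1 else 0) * α s p
         - (if p = s then 1 else 0) * (if r = u then 1 else 0) * α t q) := by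
  set A := (↑g⁻¹ : Matrix (Fin n) (Fin n) ℝ) with hA
  set B := (↑g : Matrix (Fin n) (Fin n) ℝ) with hB
  have hAB : A * B = 1 := g.inv_mul
  have hBA : B * A = 1 := g.mul_inv
  have hact : ∀ a b c, act g (bVec s t u) a b c = A s a * A t b * B c u := by
    intro a b c
    simp [act, bVec, mul_ite, ite_mul, mul_zero, zero_mul, mul_one,
      Finset.sum_ite_eq, Finset.sum_ite_eq', hA, hB]
  have hMB : mconj g α * B = B * α := by
    rw [mconj, ← hA, ← hB, Matrix.mul_assoc, hAB, Matrix.mul_one]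
  have hAM : A * mconj g α = α * A := by
    rw [mconj, ← hA, ← hB, ← Matrix.mul_assoc, ← Matrix.mul_assoc, hAB, Matrix.one_mul]
  -- RHS simplification
  rw [show (∑ p, ∑ q, ∑ r, A p i * A q j * B k r *
        ((if p = s then 1 else 0) * (if q = t then 1 else 0) * α r u
         - (if q = t then 1 else 0) * (if r = u then 1 else 0) * α s p
         - (if p = s then 1 else 0) * (if r = u then 1 else 0) * α t q))
      = A s i * A t j * (B * α) k u - (α * A) s i * A t j * B k u
        - A s i * (α * A) t j * B k u from ?_]
  · -- LHS
    have e1 : ∑ r, mconj g α k r * (act g (bVec s t u)) i j r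
        = A s i * A t j * (B * α) k u := by
      have : ∀ r, mconj g α k r * (act g (bVec s t u)) i j r
          = (A s i * A t j) * (mconj g α k r * B r u) := by
        intro r; rw [hact]; ring
      rw [Finset.sum_congr rfl fun r _ => this r, ← Finset.mul_sum, ← Matrix.mul_apply, hMB]
    have e2 : ∑ p, mconj g α p i * (act g (bVec s t u)) p j k
        = (α * A) s i * A t j * B k u := by
      have : ∀ p, mconj g α p i * (act g (bVec s t u)) p j k
          = (A t j * B k u) * (A s p * mconj g α p i) := by
        intro p; rw [hact]; ring
      rw [Finset.sum_congr rfl fun p _ => this p, ← Finset.mul_sum, ← Matrix.mul_apply, hAM]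
      ring
    have e3 : ∑ q, mconj g α q j * (act g (bVec s t u)) i q k
        = A s i * (α * A) t j * B k u := by
      have : ∀ q, mconj g α q j * (act g (bVec s t u)) i q k
          = (A s i * B k u) * (A t q * mconj g α q j) := by
        intro q; rw [hact]; ring
      rw [Finset.sum_congr rfl fun q _ => this q, ← Finset.mul_sum, ← Matrix.mul_apply, hAM]
      ring
    rw [e1, e2, e3]
  · -- RHS: collapse the ifs
    simp only [mul_sub, Finset.sum_sub_distrib]
    congr 1
    · congr 1
      · simp [mul_ite, ite_mul, mul_zero, zero_mul, mul_one,
          Finset.sum_ite_eq, Finset.sum_ite_eq', Finset.mul_sum, Matrix.mul_apply]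
        exact Finset.sum_congr rfl fun x _ => by ring
      · simp [mul_ite, ite_mul, mul_zero, zero_mul, mul_one,
          Finset.sum_ite_eq, Finset.sum_ite_eq', Matrix.mul_apply]
        rw [Finset.sum_mul, Finset.sum_mul]
        exact Finset.sum_congr rfl fun x _ => by ring
    · simp [mul_ite, ite_mul, mul_zero, zero_mul, mul_one,
        Finset.sum_ite_eq, Finset.sum_ite_eq', Matrix.mul_apply]
      rw [Finset.mul_sum, Finset.sum_mul]
      exact Finset.sum_congr rfl fun x _ => by ring

lemma piEnd_bVec (α : Matrix (Fin n) (Fin n) ℝ) (s t u p q r : Fin n) :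
    piEnd α (bVec s t u) p q r
      = (if p = s then 1 else 0) * (if q = t then 1 else 0) * α r u
        - (if q = t then 1 else 0) * (if r = u then 1 else 0) * α s p
        - (if p = s then 1 else 0) * (if r = u then 1 else 0) * α t q := by
  rw [piEnd_apply]
  simp [bVec, mul_ite, ite_mul, mul_zero, zero_mul, mul_one,
    Finset.sum_ite_eq, Finset.sum_ite_eq']

lemma equiv_bVec (g : GL (Fin n) ℝ) (α : Matrix (Fin n) (Fin n) ℝ) (s t u : Fin n) :
    piEnd (mconj g α) (act g (bVec s t u)) = act g (piEnd α (bVec s t u)) := by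
  funext i j k
  rw [piEnd_apply, equiv_bVec_aux g α s t u i j k]
  show _ = ∑ p, ∑ q, ∑ r, _
  exact Finset.sum_congr rfl fun p _ => Finset.sum_congr rfl fun q _ =>
    Finset.sum_congr rfl fun r _ => by rw [piEnd_bVec]

/-- the action as a linear map. -/
def actL (g : GL (Fin n) ℝ) : Vn n →ₗ[ℝ] Vn n where
  toFun := act g
  map_add' μ ν := by
    funext i j k
    simp only [act, Pi.add_apply, mul_add, Finset.sum_add_distrib]
  map_smul' c μ := by
    funext i j k
    simp only [act, Pi.smul_apply, smul_eq_mul, RingHom.id_apply, Finset.mul_sum]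
    exact Finset.sum_congr rfl fun p _ => Finset.sum_congr rfl fun q _ =>
      Finset.sum_congr rfl fun r _ => by ring

lemma act_smul (g : GL (Fin n) ℝ) (a : ℝ) (μ : Vn n) : act g (a • μ) = a • act g μ :=
  (actL g).map_smul a μ

lemma equivariance (g : GL (Fin n) ℝ) (α : Matrix (Fin n) (Fin n) ℝ) (μ : Vn n) :
    piEnd (mconj g α) (act g μ) = act g (piEnd α μ) := by
  have : piEnd (mconj g α) ∘ₗ actL g = actL g ∘ₗ piEnd α := by
    apply LinearMap.ext
    intro μ
    rw [decomp μ, map_sum, map_sum]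
    refine Finset.sum_congr rfl fun x _ => ?_
    rw [_root_.map_smul, _root_.map_smul]
    show _ • piEnd (mconj g α) (actL g (bVec x.1 x.2.1 x.2.2)) = _
    rw [show actL g (bVec x.1 x.2.1 x.2.2) = act g (bVec x.1 x.2.1 x.2.2) from rfl,
      equiv_bVec]
    rfl
  exact congrFun (congrArg (fun (T : Vn n →ₗ[ℝ] Vn n) => ⇑T) this) μ

/-- the action as a linear equivalence. -/
def actE (g : GL (Fin n) ℝ) : Vn n ≃ₗ[ℝ] Vn n :=
  LinearEquiv.ofLinear (actL g) (actL g⁻¹)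
    (LinearMap.ext fun μ => act_act_inv g μ) (LinearMap.ext fun μ => act_inv_act g μ)

lemma eigenspace_conj (g : GL (Fin n) ℝ) (α : Matrix (Fin n) (Fin n) ℝ) (a : ℝ) :
    Module.End.eigenspace (piEnd (mconj g α)) a
      = Submodule.map (↑(actE g) : Vn n →ₗ[ℝ] Vn n) (Module.End.eigenspace (piEnd α) a) := by
  ext x
  rw [Submodule.mem_map_equiv, Module.End.mem_eigenspace_iff, Module.End.mem_eigenspace_iff]
  have hsymm : (actE g).symm x = act g⁻¹ x := rfl
  rw [hsymm]
  constructor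
  · intro h
    have he := equivariance g α (act g⁻¹ x)
    rw [act_act_inv] at he
    have : act g (piEnd α (act g⁻¹ x)) = a • x := he.symm.trans h
    have h2 := congrArg (act g⁻¹) this
    rw [act_inv_act, act_smul] at h2
    exact h2
  · intro h
    have he := equivariance g α (act g⁻¹ x)
    rw [act_act_inv] at he
    rw [he, h, act_smul, act_act_inv]

lemma mFun_mconj (g : GL (Fin n) ℝ) (α : Matrix (Fin n) (Fin n) ℝ) (μ : Vn n) :
    mFun μ (mconj g α) = mFun (act g⁻¹ μ) α := by
  rw [mFun, mFun]
  congr 1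
  ext r
  simp only [Set.mem_setOf_eq]
  have hsup : (⨆ (a : ℝ) (_ : a ≠ r), Module.End.eigenspace (piEnd (mconj g α)) a)
      = Submodule.map (↑(actE g) : Vn n →ₗ[ℝ] Vn n)
          (⨆ (a : ℝ) (_ : a ≠ r), Module.End.eigenspace (piEnd α) a) := by
    simp only [eigenspace_conj, Submodule.map_iSup]
  rw [hsup, Submodule.mem_map_equiv]
  rfl

end Aux5
section Aux6

lemma mconj_one (δ : Matrix (Fin n) (Fin n) ℝ) : mconj (1 : GL (Fin n) ℝ) δ = δ := by
  simp [mconj]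

lemma smul_mem_DiagSet {β : Matrix (Fin n) (Fin n) ℝ} (hβ : β.IsDiag) (c : ℝ) :
    c • β ∈ DiagSet (n := n) :=
  ⟨1, c • β, fun i j hij => by simp [hβ hij], (mconj_one _).symm⟩

lemma qF_mconj (g : GL (Fin n) ℝ) (δ : Matrix (Fin n) (Fin n) ℝ) :
    qF (mconj g δ) = qF δ := by
  set B := (↑g : Matrix (Fin n) (Fin n) ℝ) with hB
  set A := (↑g⁻¹ : Matrix (Fin n) (Fin n) ℝ) with hA
  have hAB : A * B = 1 := g.inv_mul
  have hm : mconj g δ = B * δ * A := rfl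
  have h1 : (B * δ * A) * (B * δ * A) = B * (δ * δ) * A := by
    calc (B * δ * A) * (B * δ * A) = B * δ * (A * B) * δ * A := by
          simp only [Matrix.mul_assoc]
      _ = B * (δ * δ) * A := by rw [hAB]; simp only [Matrix.mul_assoc, Matrix.one_mul]
  rw [qF, qF, hm, h1, Matrix.trace_mul_cycle, ← Matrix.mul_assoc, hAB, Matrix.one_mul]

lemma qF_diag {δ : Matrix (Fin n) (Fin n) ℝ} (hδ : δ.IsDiag) : qF δ = normsqM δ := by
  rw [qF, normsqM, innM]
  congr 2
  ext i j
  rw [Matrix.transpose_apply]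
  by_cases h : i = j
  · rw [h]
  · rw [hδ h, hδ (Ne.symm h)]

lemma qF_smul (c : ℝ) (δ : Matrix (Fin n) (Fin n) ℝ) : qF (c • δ) = c ^ 2 * qF δ := by
  rw [qF, qF, Matrix.smul_mul, Matrix.mul_smul, smul_smul, Matrix.trace_smul]
  simp [sq]

lemma mT_le {μ : Vn n} {δ : Matrix (Fin n) (Fin n) ℝ} {i j k : Fin n} (h : μ i j k ≠ 0) :
    mT μ δ ≤ innM δ (wt i j k) := by
  apply csInf_le
  · apply Set.Finite.bddBelow
    apply Set.Finite.subset (Set.finite_range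
      (fun t : Fin n × Fin n × Fin n => innM δ (wt t.1 t.2.1 t.2.2)))
    rintro x ⟨i, j, k, _, rfl⟩
    exact ⟨(i, j, k), rfl⟩
  · exact ⟨i, j, k, h, rfl⟩

lemma one_le_mT {μ : Vn n} {δ : Matrix (Fin n) (Fin n) ℝ} (hne : μ ≠ 0)
    (h : ∀ i j k, μ i j k ≠ 0 → 1 ≤ innM δ (wt i j k)) : 1 ≤ mT μ δ := by
  apply le_csInf
  · obtain ⟨i, j, k, hijk⟩ := exists_ne_zero hne
    exact ⟨innM δ (wt i j k), i, j, k, hijk, rfl⟩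
  · rintro x ⟨i, j, k, hijk, rfl⟩
    exact h i j k hijk

lemma one_le_inn_hull {ν : Vn n} {δ γ : Matrix (Fin n) (Fin n) ℝ}
    (h : ∀ w ∈ wtSet ν, 1 ≤ innM δ w) (hγ : γ ∈ convexHull ℝ (wtSet ν)) : 1 ≤ innM δ γ :=
  convexHull_min h (convex_halfSpace_ge (isLinearMap_innM δ) 1) hγ

lemma SS_act {β : Matrix (Fin n) (Fin n) ℝ} {μ : Vn n} (h : μ ∈ SS β) (g : GL (Fin n) ℝ) :
    act g μ ∈ SS β := by
  obtain ⟨hne, hskew, ⟨g₀, hg₀⟩, hbd⟩ := h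
  refine ⟨act_ne_zero g hne, act_skew g hskew, ⟨g₀ * g⁻¹, ?_⟩, fun g' => ?_⟩
  · rw [act_act, inv_mul_cancel_right]
    exact hg₀
  · rw [act_act]
    exact hbd (g' * g)

end Aux6
section Main

variable {β : Matrix (Fin n) (Fin n) ℝ}

lemma SSβ_setup {μ : Vn n} (hμ : μ ∈ SS β) : β ≠ 0 ∧ 0 < normsqM β := by
  obtain ⟨hne, _, ⟨g₀, hg₀⟩, _⟩ := hμ
  have hβne : β ≠ 0 := hg₀ ▸ betaMu_ne_zero (act_ne_zero g₀ hne)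
  exact ⟨hβne, normsqM_pos hβne⟩

/-- lower bound: every admissible α has q(α) ≥ 1/‖β‖². -/
lemma QF_lower {μ : Vn n} (hμ : μ ∈ SS β) :
    ∀ x ∈ {x : ℝ | ∃ α ∈ DiagSet (n := n), 1 ≤ mFun μ α ∧ x = qF α},
      (normsqM β)⁻¹ ≤ x := by
  obtain ⟨hpβne, hpos⟩ := SSβ_setup hμ
  obtain ⟨hne, hskew, ⟨g₀, hg₀⟩, hbd⟩ := hμ
  rintro x ⟨α, ⟨g, δ, hδdiag, rfl⟩, hm, rfl⟩
  set ν := act g⁻¹ μ with hν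
  have hνne : ν ≠ 0 := act_ne_zero g⁻¹ hne
  rw [mFun_mconj, ← hν, mFun_eq_mT hδdiag] at hm
  have h1 : ∀ w ∈ wtSet ν, 1 ≤ innM δ w := by
    rintro w ⟨i, j, k, hijk, rfl⟩
    exact le_trans hm (mT_le hijk)
  have spec := betaMu_spec hνne
  have h2 : 1 ≤ innM δ (betaMu ν) := one_le_inn_hull h1 spec.1
  have h3 := innM_sq_le δ (betaMu ν)
  have h4 : normsqM (betaMu ν) ≤ normsqM β := normsq_le_of_normM_le (hbd g⁻¹)
  have h5 : 0 < normsqM (betaMu ν) := normsqM_pos (betaMu_ne_zero hνne)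
  rw [qF_mconj, qF_diag hδdiag]
  rw [inv_eq_one_div, div_le_iff₀ hpos]
  nlinarith [normsqM_nonneg δ]

/-- the candidate minimum, in terms of act g₀. -/
lemma QF_mem {μ : Vn n} (hβ : β.IsDiag) (hμ' : μ ≠ 0) (hbm : betaMu μ = β) :
    1 ≤ mT μ ((normsqM β)⁻¹ • β) := by
  have hβne : β ≠ 0 := hbm ▸ betaMu_ne_zero hμ'
  have hpos : 0 < normsqM β := normsqM_pos hβne
  have spec := betaMu_spec hμ'
  rw [hbm] at spec
  refine one_le_mT hμ' fun i j k h => ?_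
  have hw : normsqM β ≤ innM β (wt i j k) :=
    min_inner (convex_convexHull ℝ _) spec.1 spec.2
      (subset_convexHull ℝ _ ⟨i, j, k, h, rfl⟩)
  rw [innM_smul_left]
  calc (1:ℝ) = (normsqM β)⁻¹ * normsqM β := (inv_mul_cancel₀ (ne_of_gt hpos)).symm
    _ ≤ (normsqM β)⁻¹ * innM β (wt i j k) :=
        mul_le_mul_of_nonneg_left hw (le_of_lt (inv_pos.2 hpos))

lemma qF_cβ (hβ : β.IsDiag) (hpos : 0 < normsqM β) :
    qF ((normsqM β)⁻¹ • β) = (normsqM β)⁻¹ := by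
  rw [qF_smul, qF_diag hβ]
  field_simp

lemma QF_eq (hβ : β.IsDiag) {μ : Vn n} (hμ : μ ∈ SS β) : QF μ = (normsqM β)⁻¹ := by
  obtain ⟨hβne, hpos⟩ := SSβ_setup hμ
  obtain ⟨hne, hskew, ⟨g₀, hg₀⟩, hbd⟩ := hμ
  have hμ'ne : act g₀ μ ≠ 0 := act_ne_zero g₀ hne
  apply IsLeast.csInf_eq
  constructor
  · refine ⟨mconj g₀⁻¹ ((normsqM β)⁻¹ • β), ⟨g₀⁻¹, (normsqM β)⁻¹ • β,
      fun i j hij => by simp [hβ hij], rfl⟩, ?_, ?_⟩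
    · rw [mFun_mconj, inv_inv, mFun_eq_mT (fun i j hij => by simp [hβ hij])]
      exact QF_mem hβ hμ'ne hg₀
    · rw [qF_mconj, qF_cβ hβ hpos]
  · exact QF_lower ⟨hne, hskew, ⟨g₀, hg₀⟩, hbd⟩

lemma mem_LambdaF (hβ : β.IsDiag) {μ : Vn n} (hμ : μ ∈ SS β) (hbm : betaMu μ = β) :
    (normsqM β)⁻¹ • β ∈ LambdaF μ := by
  obtain ⟨hβne, hpos⟩ := SSβ_setup hμ
  refine ⟨smul_mem_DiagSet hβ _, ?_, ?_⟩
  · rw [qF_cβ hβ hpos, QF_eq hβ hμ]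
  · rw [mFun_eq_mT (fun i j hij => by simp [hβ hij])]
    exact QF_mem hβ hμ.1 hbm

end Main
/-- **Lemma 2.7.** β/‖β‖² ∈ Λ(μ) for all μ ∈ S_β with β_μ = β; in particular
Q(μ) = 1/‖β‖² for any μ ∈ S_β and S_β = G.{μ ∈ S_β : β/‖β‖² ∈ Λ(μ)}. -/
theorem stratum_beta_in_Lambda {n : ℕ} (β : Matrix (Fin n) (Fin n) ℝ) (hβ : β.IsDiag) :
    (∀ μ ∈ SS β, betaMu μ = β → (normsqM β)⁻¹ • β ∈ LambdaF μ) ∧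
    (∀ μ ∈ SS β, QF μ = (normsqM β)⁻¹) ∧
    SS β = {ν | ∃ g : GL (Fin n) ℝ, ∃ μ ∈ SS β, (normsqM β)⁻¹ • β ∈ LambdaF μ ∧ ν = act g μ} := by
  refine ⟨fun μ hμ hbm => mem_LambdaF hβ hμ hbm, fun μ hμ => QF_eq hβ hμ, ?_⟩
  ext ν
  simp only [Set.mem_setOf_eq]
  constructor
  · intro hν
    obtain ⟨hne, hskew, ⟨g₀, hg₀⟩, hbd⟩ := hν
    have hν' : ν ∈ SS β := ⟨hne, hskew, ⟨g₀, hg₀⟩, hbd⟩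
    exact ⟨g₀⁻¹, act g₀ ν, SS_act hν' g₀, mem_LambdaF hβ (SS_act hν' g₀) hg₀,
      (act_inv_act g₀ ν).symm⟩
  · rintro ⟨g, μ, hμ, _, rfl⟩
    exact SS_act hμ g

end
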